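/- arXiv:1212.2887 — 9 statements merged into one kernel-verified Lean document; each statement's English description precedes it below -/
import Mathlib

section
/- In any pocrim, x + (y → x) ≥ y → (x + x). -/
/-- A pocrim: commutative monoid (z, ad) with residuation operation im,
    ordered by `x ≥ y iff im x y = z`. -/
class Pocrim (M : Type*) where
  z : M
  ad : M → M → M
  im : M → M → M
  ad_assoc : ∀ x y w : M, ad (ad x y) w = ad x (ad y w)
  ad_comm : ∀ x y : M, ad x y = ad y x
  ad_zero : ∀ x : M, ad x z = x
  ge_refl : ∀ x : M, im x x = z
  ge_trans : ∀ x y w : M, im x y = z → im y w = z → im x w = z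
  ge_antisymm : ∀ x y : M, im x y = z → im y x = z → x = y
  ad_mono : ∀ x y w : M, im x y = z → im (ad x w) (ad y w) = z
  ge_zero : ∀ x : M, im x z = z
  resid : ∀ x y w : M, (im (ad x y) w = z ↔ im x (im y w) = z)

namespace Pocrim

variable {M : Type*} [Pocrim M]

/-- `ge x y` means x ≥ y, i.e. x → y = 0. -/
def ge (x y : M) : Prop := im x y = z

end Pocrim

open Pocrim

theorem pocrim_add_im_ge {M : Type*} [Pocrim M] (x y : M) :
    ge (ad x (im y x)) (im y (ad x x)) := by
  unfold ge
  rw [← resid]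
  -- goal: im (ad (ad x (im y x)) y) (ad x x) = z
  have h1 : im (ad (im y x) y) x = Pocrim.z := by
    rw [resid]; exact ge_refl _
  have h2 := ad_mono (ad (im y x) y) x x h1
  have heq : ad (ad x (im y x)) y = ad (ad (im y x) y) x := by
    rw [ad_assoc, ad_comm, ad_assoc]
  rw [heq]
  exact h2
end

section
/- A pocrim is naturally ordered (i.e., whenever x ≥ y there exists z with x = y + z) if and only if it satisfies the identity x + (x → y) = y + (y → x). -/
open Pocrim

lemma add_ge_right {M : Type*} [Pocrim M] (x y : M) : im (ad x y) y = z := by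
  have h := ad_mono x z y (ge_zero x)
  rwa [ad_comm z y, ad_zero] at h

lemma add_ge_left {M : Type*} [Pocrim M] (x y : M) : im (ad x y) x = z := by
  rw [ad_comm]; exact add_ge_right y x

lemma key1 {M : Type*} [Pocrim M] (x y : M) : im (ad x (im x y)) y = z := by
  rw [ad_comm]
  exact (resid (im x y) x y).mpr (ge_refl (im x y))

lemma half {M : Type*} [Pocrim M]
    (h : ∀ x y : M, ge x y → ∃ w : M, x = ad y w) (x y : M) :
    im (ad x (im x y)) (ad y (im y x)) = z := by
  obtain ⟨w, hw⟩ := h (ad x (im x y)) y (key1 x y)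
  have hx : im (ad y w) x = z := hw ▸ add_ge_left x (im x y)
  rw [ad_comm] at hx
  have hwx : im w (im y x) = z := (resid w y x).mp hx
  have := ad_mono w (im y x) y hwx
  rw [ad_comm w y, ad_comm (im y x) y, ← hw] at this
  exact this

theorem pocrim_naturally_ordered_iff_cwc {M : Type*} [Pocrim M] :
    (∀ x y : M, ge x y → ∃ w : M, x = ad y w) ↔
    (∀ x y : M, ad x (im x y) = ad y (im y x)) := by
  constructor
  · intro h x y
    exact ge_antisymm _ _ (half h x y) (half h y x)
  · intro h x y hxy
    refine ⟨im y x, ?_⟩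
    have := h x y
    rw [hxy, ad_zero] at this
    exact this
end

section
/- Every idempotent pocrim is a hoop: if x + x = x holds for all x in a pocrim, then x + (x → y) = y + (y → x) holds for all x, y. -/
open Pocrim

section Aux

variable {M : Type*} [Pocrim M]

/-- x + y ≥ y -/
lemma aux_ad_ge_right (x y : M) : im (ad x y) y = z := by
  have h := ad_mono x z y (ge_zero x)
  rwa [ad_comm z y, ad_zero] at h

/-- x + y ≥ x -/
lemma aux_ad_ge_left (x y : M) : im (ad x y) x = z := by
  rw [ad_comm]; exact aux_ad_ge_right y x

/-- if w ≥ x and w ≥ y then w ≥ x + y (uses idempotence) -/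
lemma aux_lub (hidem : ∀ x : M, ad x x = x) (w x y : M)
    (hx : im w x = z) (hy : im w y = z) : im w (ad x y) = z := by
  have h1 : im (ad w w) (ad x w) = z := ad_mono w x w hx
  have h2 : im (ad x w) (ad x y) = z := by
    have := ad_mono w y x hy
    rwa [ad_comm w x, ad_comm y x] at this
  have := ge_trans _ _ _ h1 h2
  rwa [hidem] at this

/-- x + (x→y) ≥ y -/
lemma aux_mp (x y : M) : im (ad x (im x y)) y = z := by
  rw [ad_comm]
  exact (resid (im x y) x y).mpr (ge_refl _)

/-- x + y ≥ x→y (uses idempotence) -/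
lemma aux_ad_ge_im (hidem : ∀ x : M, ad x x = x) (x y : M) :
    im (ad x y) (im x y) = z := by
  apply (resid (ad x y) x y).mp
  have : ad (ad x y) x = ad x y := by
    rw [ad_comm x y, ad_assoc, hidem]
  rw [this]
  exact aux_ad_ge_right x y

/-- key: x + (x→y) = x + y -/
lemma aux_key (hidem : ∀ x : M, ad x x = x) (x y : M) :
    ad x (im x y) = ad x y := by
  apply Pocrim.ge_antisymm
  · exact aux_lub hidem _ _ _ (aux_ad_ge_left x (im x y)) (aux_mp x y)
  · exact aux_lub hidem _ _ _ (aux_ad_ge_left x y) (aux_ad_ge_im hidem x y)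

end Aux

theorem idempotent_pocrim_is_hoop {M : Type*} [Pocrim M]
    (hidem : ∀ x : M, ad x x = x) :
    ∀ x y : M, ad x (im x y) = ad y (im y x) := by
  intro x y
  rw [aux_key hidem x y, aux_key hidem y x, ad_comm]
end

section
/- In any hoop, if a ≥ a → b and c = c → b, then a ≥ c. -/
open Pocrim

/-- A hoop is a pocrim satisfying x + (x → y) = y + (y → x). -/
class Hoop (M : Type*) extends Pocrim M where
  cwc : ∀ x y : M, ad x (im x y) = ad y (im y x)

section PocrimLemmas

variable {M : Type*} [Pocrim M]

instance : Std.Associative (Pocrim.ad : M → M → M) := ⟨Pocrim.ad_assoc⟩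
instance : Std.Commutative (Pocrim.ad : M → M → M) := ⟨Pocrim.ad_comm⟩

lemma pge_trans {x y w : M} (h1 : ge x y) (h2 : ge y w) : ge x w :=
  Pocrim.ge_trans x y w h1 h2

lemma pge_of_eq {x y : M} (h : x = y) : ge x y := h ▸ Pocrim.ge_refl x

/-- Galois connection / residuation in `ge` form. -/
lemma pge_galois {t y x : M} : ge t (im y x) ↔ ge (ad t y) x :=
  (Pocrim.resid t y x).symm

/-- x + y ≥ x. -/
lemma padd_ge_left (x y : M) : ge (ad x y) x := by
  have h := Pocrim.ad_mono y Pocrim.z x (Pocrim.ge_zero y)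
  rw [Pocrim.ad_comm y x, Pocrim.ad_comm Pocrim.z x, Pocrim.ad_zero] at h
  exact h

/-- x ≥ y → x. -/
lemma psub_le (x y : M) : ge x (im y x) :=
  pge_galois.mpr (padd_ge_left x y)

/-- (y → x) + y ≥ x. -/
lemma padd_sub_ge (x y : M) : ge (ad (im y x) y) x :=
  pge_galois.mp (pge_of_eq rfl)

/-- y + (y → x) ≥ x. -/
lemma padd_sub_ge' (x y : M) : ge (ad y (im y x)) x := by
  rw [Pocrim.ad_comm]; exact padd_sub_ge x y

lemma padd_mono_left {x y : M} (w : M) (h : ge x y) : ge (ad x w) (ad y w) :=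
  Pocrim.ad_mono x y w h

lemma padd_mono_right {x y : M} (w : M) (h : ge x y) : ge (ad w x) (ad w y) := by
  rw [Pocrim.ad_comm w x, Pocrim.ad_comm w y]; exact padd_mono_left w h

/-- antitone in the first (subtrahend) argument : y ≥ x → (x → w) ≥ (y → w). -/
lemma pim_antitone {x y : M} (w : M) (h : ge y x) : ge (im x w) (im y w) := by
  refine pge_galois.mpr ?_
  have h1 : ge (ad (im x w) y) (ad (im x w) x) := padd_mono_right _ h
  exact pge_trans h1 (padd_sub_ge w x)

/-- monotone in the second argument : y ≥ x → (w → y) ≥ (w → x). -/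
lemma pim_mono {x y : M} (w : M) (h : ge y x) : ge (im w y) (im w x) := by
  refine pge_galois.mpr ?_
  exact pge_trans (padd_sub_ge y w) h

/-- (y+w) → x = w → (y → x) : iterated residuation. -/
lemma pim_im (w y x : M) : im w (im y x) = im (ad y w) x := by
  apply Pocrim.ge_antisymm
  · show ge (im w (im y x)) (im (ad y w) x)
    refine pge_galois.mpr ?_
    have h1 : ge (ad (im w (im y x)) w) (im y x) := padd_sub_ge _ _
    have h2 : ge (ad (ad (im w (im y x)) w) y) (ad (im y x) y) := padd_mono_left _ h1
    have h3 : ge (ad (ad (im w (im y x)) w) y) x := pge_trans h2 (padd_sub_ge x y)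
    have e : ad (im w (im y x)) (ad y w) = ad (ad (im w (im y x)) w) y := by ac_rfl
    rw [e]; exact h3
  · show ge (im (ad y w) x) (im w (im y x))
    refine pge_galois.mpr ?_
    refine pge_galois.mpr ?_
    have h1 : ge (ad (im (ad y w) x) (ad y w)) x := padd_sub_ge x (ad y w)
    have e : ad (ad (im (ad y w) x) w) y = ad (im (ad y w) x) (ad y w) := by ac_rfl
    rw [e]; exact h1

end PocrimLemmas

section HoopLemmas

variable {M : Type*} [Hoop M]

/-- In a hoop, if x ≥ y then y + (y → x) = x (exact decomposition). -/
lemma hadd_im_of_ge {x y : M} (h : ge x y) : ad y (im y x) = x := by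
  have := Hoop.cwc y x
  rw [this, (show im x y = Pocrim.z from h), Pocrim.ad_zero]

end HoopLemmas

theorem hoop_halving_lower {M : Type*} [Hoop M] (a b c : M)
    (ha : ge a (im a b)) (hc : c = im c b) : ge a c := by
  -- q₀ = b ∸ a ; a' = b ∸ q₀ (WLOG replacement for a)
  set q₀ := im a b with hq₀
  set a' := im q₀ b with ha'
  -- a ≥ a'
  have h2 : ge a a' := pge_galois.mpr (padd_sub_ge' b a)
  -- b ∸ a' = q₀  (exact)
  have h3 : im a' b = q₀ := by
    apply Pocrim.ge_antisymm
    · exact pim_antitone b h2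
    · exact pge_galois.mpr (padd_sub_ge' b q₀)
  -- a' ≥ q₀
  have h4 : ge a' q₀ := pim_antitone b ha
  -- b ≥ a'
  have h5 : ge b a' := psub_le b q₀
  -- a' + q₀ = b  (exact)
  have h6 : ad a' q₀ = b := by
    have := hadd_im_of_ge h5
    rwa [h3] at this
  -- b = c + c  (exact)
  have hbc : ge b c := hc ▸ psub_le b c
  have hb : ad c c = b := by
    have := hadd_im_of_ge hbc
    rwa [← hc] at this
  -- f = c ∸ q₀, k = c ∸ f, e = c ∸ a'
  set f := im q₀ c with hf
  set k := im f c with hk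
  set e := im a' c with he
  -- q₀ ≥ k and c ≥ k
  have h7 : ge q₀ k := pge_galois.mpr (padd_sub_ge' c q₀)
  have h8 : ge c k := psub_le c f
  -- c = k + (k → c) (exact)
  have h9 : ad k (im k c) = c := hadd_im_of_ge h8
  -- (k → c) = f
  have h12 : im k c = f := by
    apply Pocrim.ge_antisymm
    · exact pim_antitone c h7
    · exact pge_galois.mpr (padd_sub_ge' c f)
  -- c = k + f (exact)
  have h13 : ad k f = c := by rwa [h12] at h9
  -- (c → a') = f
  have h14 : im c a' = f := by
    rw [ha', pim_im c q₀ b, Pocrim.ad_comm q₀ c, ← pim_im q₀ c b, ← hc]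
  -- a' + e = c + f
  have h15 : ad a' e = ad c f := by
    rw [he, Hoop.cwc a' c, h14]
  -- (e + k) + a' = b
  have h16 : ad (ad e k) a' = b := by
    have e1 : ad (ad e k) a' = ad (ad a' e) k := by ac_rfl
    rw [e1, h15]
    have e2 : ad (ad c f) k = ad c (ad k f) := by ac_rfl
    rw [e2, h13, hb]
  -- e + k ≥ q₀
  have h17 : ge (ad e k) q₀ := by
    rw [← h3]
    exact pge_galois.mpr (pge_of_eq h16)
  -- f ≥ e
  have h18 : ge f e := pim_antitone c h4
  -- c ≥ e + k
  have h19 : ge c (ad e k) := by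
    have e1 : ge (ad f k) (ad e k) := padd_mono_left k h18
    have e2 : ad k f = ad f k := by ac_rfl
    exact pge_trans (pge_of_eq (by rw [← h13, e2])) e1
  -- c ≥ q₀
  have h20 : ge c q₀ := pge_trans h19 h17
  -- a' + c ≥ b
  have h21 : ge (ad a' c) b := by
    have e1 : ge (ad a' c) (ad a' q₀) := padd_mono_right a' h20
    exact pge_trans e1 (pge_of_eq h6)
  -- a' ≥ c
  have h23 : ge a' c := by
    have := pge_galois.mpr h21
    rwa [← hc] at this
  exact pge_trans h2 h23
end

section
/- In any hoop, if a ≤ a → b and c = c → b, then a ≤ c. -/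
open Pocrim

namespace HoopAux

variable {M : Type*} [Pocrim M]

/-- Residuation as an adjunction on `ge`. -/
lemma adj (x y w : M) : ge (ad x y) w ↔ ge x (im y w) := Pocrim.resid x y w

/-- x + y ≥ x. -/
lemma ge_ad_left (x y : M) : ge (ad x y) x := by
  have h := Pocrim.ad_mono y Pocrim.z x (Pocrim.ge_zero y)
  rw [Pocrim.ad_comm Pocrim.z x, Pocrim.ad_zero, Pocrim.ad_comm y x] at h
  exact h

/-- x + y ≥ y. -/
lemma ge_ad_right (x y : M) : ge (ad x y) y := by
  rw [Pocrim.ad_comm]; exact ge_ad_left y x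

variable {N : Type*} [Hoop N]

/-- x + (x → y) ≥ y. -/
lemma ge_max (x y : N) : ge (ad x (im x y)) y := by
  rw [Hoop.cwc]; exact ge_ad_left y (im y x)

/-- Divisibility: if x ≥ y then y + (y → x) = x. -/
lemma div {x y : N} (h : ge x y) : ad y (im y x) = x := by
  rw [← Hoop.cwc x y]
  unfold ge at h
  rw [h, Pocrim.ad_zero]

/-- im is monotone in its second argument. -/
lemma im_mono2 {y y' : N} (x : N) (h : ge y' y) : ge (im x y') (im x y) := by
  rw [← adj]
  refine Pocrim.ge_trans _ y' _ ?_ h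
  rw [Pocrim.ad_comm]
  exact ge_max x y'

/-- im is antitone in its first argument. -/
lemma im_anti1 {x x' : N} (y : N) (h : ge x' x) : ge (im x y) (im x' y) := by
  rw [← adj]
  refine Pocrim.ge_trans _ (ad (im x y) x) _ ?_ ?_
  · rw [Pocrim.ad_comm (im x y) x', Pocrim.ad_comm (im x y) x]
    exact Pocrim.ad_mono x' x (im x y) h
  · rw [Pocrim.ad_comm]
    exact ge_max x y

/-- im (x + y) w = im x (im y w). -/
lemma im_ad_eq (x y w : N) : im (ad x y) w = im x (im y w) := by
  apply Pocrim.ge_antisymm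
  · -- ge (im (ad x y) w) (im x (im y w))... we show via adjunction chain with t := im (ad x y) w
    have h : ge (ad (ad (im (ad x y) w) x) y) w := by
      rw [Pocrim.ad_assoc]
      rw [adj]
      exact Pocrim.ge_refl _
    rw [adj] at h
    rw [adj] at h
    exact h
  · have h : ge (ad (im x (im y w)) (ad x y)) w := by
      rw [← Pocrim.ad_assoc]
      rw [adj, adj]
      exact Pocrim.ge_refl _
    rw [adj] at h
    exact h

end HoopAux

open HoopAux

theorem hoop_halving_upper {M : Type*} [Hoop M] (a b c : M)
    (ha : ge (im a b) a) (hc : c = im c b) : ge c a := by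
  set u := im c a with hu
  set p := im u a with hp
  -- a ≥ u
  have hau : ge a u := by
    rw [hu, ← adj]; exact ge_ad_left a c
  -- a = u + p
  have h2 : ad u p = a := div hau
  -- a ≥ p
  have hap : ge a p := by
    rw [hp, ← adj]; exact ge_ad_left a u
  -- c ≥ p
  have h3 : ge c p := by
    rw [hp, ← adj]
    rw [hu, Hoop.cwc c a]
    exact ge_ad_left a (im a c)
  -- c = p + (p → c)
  have h4 : ad p (im p c) = c := div h3
  -- (a → c) ≥ u  : the key step using ha and hc
  have h5 : ge (im a c) u := by
    have hA : ge (im c (im a b)) (im c a) := im_mono2 c ha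
    have hB : im c (im a b) = im a c := by
      rw [← im_ad_eq, Pocrim.ad_comm, im_ad_eq, ← hc]
    rw [hB] at hA
    exact hA
  -- (p → c) ≥ u
  have h6 : ge (im p c) u :=
    Pocrim.ge_trans _ _ _ (im_anti1 c hap) h5
  -- conclude: c = p + (p→c) ≥ p + u = a
  have h7 : ge (ad (im p c) p) (ad u p) := Pocrim.ad_mono _ _ _ h6
  rw [Pocrim.ad_comm (im p c) p, h4, h2] at h7
  exact h7
end

section
/- In any coop, a/2 = a implies a = 0. -/
open Pocrim

/-- A coop is a hoop with a halving operation satisfying x/2 = x/2 → x. -/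
class Coop (M : Type*) extends Hoop M where
  half : M → M
  half_ax : ∀ x : M, half x = im (half x) x

open Coop

theorem coop_half_fixed_point {M : Type*} [Coop M] (a : M)
    (h : half a = a) : a = z := by
  have := half_ax a
  rw [h] at this
  rw [this, Pocrim.ge_refl]
end

section
/- A structure (H; 0, +, →) is a hoop if and only if (H; 0, +) is a commutative monoid and the equations x → x = 0, x → 0 = 0, 0 → x = x, (x + y) → z = x → (y → z), and x + (x → y) = y + (y → x) hold. -/
/-- The pocrim axioms for a given signature (z, ad, im). -/
structure IsPocrim {M : Type*} (z : M) (ad : M → M → M) (im : M → M → M) : Prop where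
  ad_assoc : ∀ x y w : M, ad (ad x y) w = ad x (ad y w)
  ad_comm : ∀ x y : M, ad x y = ad y x
  ad_zero : ∀ x : M, ad x z = x
  ge_refl : ∀ x : M, im x x = z
  ge_trans : ∀ x y w : M, im x y = z → im y w = z → im x w = z
  ge_antisymm : ∀ x y : M, im x y = z → im y x = z → x = y
  ad_mono : ∀ x y w : M, im x y = z → im (ad x w) (ad y w) = z
  ge_zero : ∀ x : M, im x z = z
  resid : ∀ x y w : M, (im (ad x y) w = z ↔ im x (im y w) = z)

/-- A hoop: a pocrim satisfying x + (x → y) = y + (y → x). -/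
structure IsHoop {M : Type*} (z : M) (ad : M → M → M) (im : M → M → M)
    extends IsPocrim z ad im : Prop where
  cwc : ∀ x y : M, ad x (im x y) = ad y (im y x)

theorem hoop_equational_axiomatization {M : Type*}
    (z : M) (ad : M → M → M) (im : M → M → M) :
    IsHoop z ad im ↔
      ((∀ x y w : M, ad (ad x y) w = ad x (ad y w)) ∧
       (∀ x y : M, ad x y = ad y x) ∧
       (∀ x : M, ad x z = x) ∧
       (∀ x : M, im x x = z) ∧
       (∀ x : M, im x z = z) ∧
       (∀ x : M, im z x = x) ∧
       (∀ x y w : M, im (ad x y) w = im x (im y w)) ∧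
       (∀ x y : M, ad x (im x y) = ad y (im y x))) := by
  constructor
  · intro h
    refine ⟨h.ad_assoc, h.ad_comm, h.ad_zero, h.ge_refl, h.ge_zero, ?_, ?_, h.cwc⟩
    · -- im z x = x, from cwc
      intro x
      have := h.cwc z x
      rw [h.ge_zero x, h.ad_zero x, h.ad_comm z (im z x), h.ad_zero] at this
      exact this
    · -- curry: im (ad x y) w = im x (im y w), by antisymmetry
      intro x y w
      set a := im (ad x y) w with ha
      set b := im x (im y w) with hb
      apply h.ge_antisymm
      · -- im a b = z
        have h1 : im (ad a (ad x y)) w = z :=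
          (h.resid a (ad x y) w).mpr (by rw [← ha]; exact h.ge_refl a)
        have h2 : im (ad (ad a x) y) w = z := by rwa [h.ad_assoc]
        have h3 : im (ad a x) (im y w) = z := (h.resid _ _ _).mp h2
        have h4 : im a (im x (im y w)) = z := (h.resid _ _ _).mp h3
        rwa [← hb] at h4
      · -- im b a = z
        have h4 : im b (im x (im y w)) = z := by rw [← hb]; exact h.ge_refl b
        have h3 : im (ad b x) (im y w) = z := (h.resid _ _ _).mpr h4
        have h2 : im (ad (ad b x) y) w = z := (h.resid _ _ _).mpr h3
        have h1 : im (ad b (ad x y)) w = z := by rwa [h.ad_assoc] at h2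
        exact (h.resid _ _ _).mp h1
  · rintro ⟨assoc, comm, adz, refl, gez, zim, curry, cwc⟩
    -- key: if im x y = z then x = ad y (im y x)
    have key : ∀ x y : M, im x y = z → x = ad y (im y x) := by
      intro x y hxy
      have := cwc x y
      rw [hxy, adz] at this
      exact this
    refine { ad_assoc := assoc, ad_comm := comm, ad_zero := adz, ge_refl := refl,
             ge_zero := gez, cwc := cwc,
             resid := fun x y w => by rw [curry],
             ge_trans := ?_, ge_antisymm := ?_, ad_mono := ?_ }
    · intro x y w hxy hyw
      rw [key x y hxy, comm, curry, hyw, gez]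
    · intro x y hxy hyx
      have := cwc x y
      rwa [hxy, hyx, adz, adz] at this
    · intro x y w hxy
      rw [key x y hxy, comm y (im y x), assoc, curry, refl, gez]
end

section
/- In any hoop, (x → y) → (y → x) = y → x. -/
open Pocrim

namespace HoopAux

variable {M : Type*} [Pocrim M]

/-- "modus ponens": (a→b)·a ⊑ b. -/
lemma mp (a b : M) : im (ad (im a b) a) b = z :=
  (resid (im a b) a b).mpr (ge_refl (im a b))

/-- a ⊑ b→a. -/
lemma le_self_im (a b : M) : im a (im b a) = z := by
  apply (resid a b a).mp
  have h2 : im (ad b a) (ad z a) = z := ad_mono b z a (ge_zero b)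
  rw [ad_comm z a, ad_zero] at h2
  rw [ad_comm a b]
  exact h2

/-- monotone in second argument. -/
lemma im_mono_right {a b : M} (c : M) (h : im a b = z) :
    im (im c a) (im c b) = z := by
  apply (resid (im c a) c b).mp
  exact ge_trans _ a _ (mp c a) h

/-- antitone in first argument. -/
lemma im_anti_left {a b : M} (c : M) (h : im a b = z) :
    im (im b c) (im a c) = z := by
  apply (resid (im b c) a c).mp
  have h1 : im (ad a (im b c)) (ad b (im b c)) = z := ad_mono a b (im b c) h
  have h2 : im (ad b (im b c)) c = z := by
    rw [ad_comm b (im b c)]; exact mp b c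
  have h3 : im (ad a (im b c)) c = z := ge_trans _ _ _ h1 h2
  rw [ad_comm (im b c) a]
  exact h3

end HoopAux

namespace HoopAux

variable {M : Type*} [Hoop M]

/-- if a ⊑ b then a = b·(b→a). -/
lemma eq_ad_of_le {a b : M} (h : im a b = z) : a = ad b (im b a) := by
  have hc := Hoop.cwc a b
  rw [h, ad_zero] at hc
  exact hc

end HoopAux

open HoopAux

theorem hoop_bosbach {M : Type*} [Hoop M] (x y : M) :
    im (im x y) (im y x) = im y x := by
  -- multiplicative reading: P = x→y, Q = y→x, T = P→Q, g = P→x, w = y·T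
  -- ⊑ a b means im a b = z
  apply Pocrim.ge_antisymm
  · -- hard direction: T ⊑ Q, via  w = y·T ⊑ x
    -- step 1: T·P ⊑ Q
    have hTPQ : im (ad (im (im x y) (im y x)) (im x y)) (im y x) = z :=
      mp (im x y) (im y x)
    -- step 2: Q·y ⊑ x
    have hQyx : im (ad (im y x) y) x = z := mp y x
    -- step 3: (T·P)·y ⊑ Q·y ⊑ x
    have h4 : im (ad (ad (im (im x y) (im y x)) (im x y)) y) (ad (im y x) y) = z :=
      ad_mono _ _ y hTPQ
    have h5 : im (ad (ad (im (im x y) (im y x)) (im x y)) y) x = z :=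
      ge_trans _ _ _ h4 hQyx
    -- rearrange: (T·P)·y = (y·T)·P
    have e1 : ad (ad (im (im x y) (im y x)) (im x y)) y
        = ad (ad y (im (im x y) (im y x))) (im x y) := by
      rw [ad_comm, ← ad_assoc]
    rw [e1] at h5
    -- step 4: w ⊑ g  where w = y·T, g = P→x
    have hwg : im (ad y (im (im x y) (im y x))) (im (im x y) x) = z :=
      (resid _ _ _).mp h5
    -- step 5: w ⊑ y
    have hwy : im (ad y (im (im x y) (im y x))) y = z := by
      have h := ad_mono (im (im x y) (im y x)) z y (ge_zero _)
      rw [ad_comm z y, ad_zero] at h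
      rw [ad_comm y (im (im x y) (im y x))]
      exact h
    -- step 6: w = y·(y→w)
    have hyw := eq_ad_of_le hwy
    -- step 7: y→w ⊑ y→g
    have h8 : im (im y (ad y (im (im x y) (im y x)))) (im y (im (im x y) x)) = z :=
      im_mono_right y hwg
    -- step 8: w = y·(y→w) ⊑ y·(y→g)
    have h9 : im (ad (im y (ad y (im (im x y) (im y x)))) y)
        (ad (im y (im (im x y) x)) y) = z := ad_mono _ _ y h8
    have h9' : im (ad y (im (im x y) (im y x))) (ad y (im y (im (im x y) x))) = z := by
      rw [hyw, ad_comm y (im y (ad y (im (im x y) (im y x)))),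
        ad_comm y (im y (im (im x y) x))]
      exact h9
    -- step 9: x ⊑ g, hence g→y ⊑ x→y = P
    have hxg : im x (im (im x y) x) = z := le_self_im x (im x y)
    have hgy : im (im (im (im x y) x) y) (im x y) = z := im_anti_left y hxg
    -- step 10: (g→y)·g ⊑ P·g ⊑ x
    have h11 : im (ad (im (im (im x y) x) y) (im (im x y) x))
        (ad (im x y) (im (im x y) x)) = z := ad_mono _ _ (im (im x y) x) hgy
    have h12 : im (ad (im x y) (im (im x y) x)) x = z := by
      rw [ad_comm]; exact mp (im x y) x
    have h13 : im (ad (im (im (im x y) x) y) (im (im x y) x)) x = z :=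
      ge_trans _ _ _ h11 h12
    -- step 11: y·(y→g) = g·(g→y) ⊑ x   (the hoop axiom!)
    have h15 : im (ad y (im y (im (im x y) x))) x = z := by
      rw [Hoop.cwc y (im (im x y) x), ad_comm (im (im x y) x) (im (im (im x y) x) y)]
      exact h13
    -- step 12: w ⊑ x
    have h17 : im (ad y (im (im x y) (im y x))) x = z := ge_trans _ _ _ h9' h15
    -- conclude: T ⊑ y→x = Q
    apply (resid (im (im x y) (im y x)) y x).mp
    rw [ad_comm]
    exact h17
  · -- easy direction: Q ⊑ T
    exact le_self_im (im y x) (im x y)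
end

section
/- Let H be a hoop such that for all x, y, if y = x → y then x = 0 or y = 0. Then H is linearly ordered: for all a, b, either a ≥ b or b ≥ a. -/
open Pocrim

section Aux

variable {M : Type*} [Pocrim M]

/-- a + b ≥ a. -/
lemma aux_ge_add_left (a b : M) : im (ad a b) a = z := by
  have h : im (ad b a) a = z := by
    rw [resid, ge_refl, ge_zero]
  rwa [ad_comm b a] at h

/-- a ≥ im b a. -/
lemma aux_le_im (a b : M) : im a (im b a) = z := by
  rw [← resid]; exact aux_ge_add_left a b

/-- a + (a → b) ≥ b. -/
lemma aux_add_im_ge' (a b : M) : im (ad (im a b) a) b = z := by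
  rw [resid, ge_refl]

/-- a + (a → b) ≥ b. -/
lemma aux_add_im_ge (a b : M) : im (ad a (im a b)) b = z := by
  have h := aux_add_im_ge' a b
  rwa [ad_comm] at h

/-- monotonicity in the second argument: p ≥ q → im c p ≥ im c q. -/
lemma aux_im_mono (c p q : M) (h : im p q = z) : im (im c p) (im c q) = z := by
  rw [← resid]
  exact Pocrim.ge_trans _ p _ (aux_add_im_ge' c p) h

/-- antitonicity in the first argument: a ≥ b → im b w ≥ im a w. -/
lemma aux_im_anti (a b w : M) (h : im a b = z) : im (im b w) (im a w) = z := by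
  rw [← resid]
  have h1 : im (ad (im b w) a) (ad (im b w) b) = z := by
    have := ad_mono a b (im b w) h
    rwa [ad_comm a, ad_comm b] at this
  exact Pocrim.ge_trans _ _ _ h1 (aux_add_im_ge' b w)

end Aux

theorem hoop_linear_of_fixed {M : Type*} [Hoop M]
    (h : ∀ x y : M, y = im x y → x = z ∨ y = z) :
    ∀ a b : M, ge a b ∨ ge b a := by
  intro a b
  set u := im a b with hu
  set v := im b a with hv
  set t := im u v with ht
  set s := im u a with hs
  set p := ad b t with hp
  -- step 1 : t + u ≥ v
  have h1 : im (ad t u) v = z := by rw [resid, ← ht, ge_refl]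
  -- step 2 : (b + t) + u ≥ a
  have h2 : im (ad (ad b t) u) a = z := by
    have hm : im (ad (ad t u) b) (ad v b) = z := ad_mono _ _ b h1
    have hyv : im (ad b v) a = z := aux_add_im_ge b a
    rw [ad_comm v b] at hm
    have h2' : im (ad (ad t u) b) a = z := Pocrim.ge_trans _ _ _ hm hyv
    have hE : ad (ad b t) u = ad (ad t u) b := by
      rw [ad_assoc b t u, ad_comm b (ad t u)]
    rwa [hE]
  -- step 3 : p ≥ s
  have h3 : im p s = z := by
    have := (resid (ad b t) u a).mp h2
    rwa [← hs, ← hp] at this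
  -- step 4 : p ≥ b
  have h4 : im p b = z := aux_ge_add_left b t
  -- step 5 : a ≥ s
  have h5 : im a s = z := by
    have := (resid a u a).mp (aux_ge_add_left a u)
    rwa [← hs] at this
  -- step 6 : p = s + (s → p)  (divisibility, since p ≥ s)
  have h6 : p = ad s (im s p) := by
    have := Hoop.cwc p s
    rwa [h3, ad_zero] at this
  -- step 7 : im s p ≥ u
  have h7 : im (im s p) u = z := by
    have ha : im (im s p) (im s b) = z := aux_im_mono s p b h4
    have hb : im (im s b) u = z := by
      have := aux_im_anti a s b h5
      rwa [← hu] at this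
    exact Pocrim.ge_trans _ _ _ ha hb
  -- step 8 : u ≥ im s a
  have h8 : im u (im s a) = z := by
    rw [← resid, hs]
    exact aux_add_im_ge u a
  -- step 9 : im s p ≥ im s a
  have h9 : im (im s p) (im s a) = z := Pocrim.ge_trans _ _ _ h7 h8
  -- step 10 : p ≥ a
  have h10 : im p a = z := by
    have hm2 : im (ad (im s p) s) (ad (im s a) s) = z := ad_mono _ _ s h9
    rw [ad_comm (im s p) s, ad_comm (im s a) s, ← h6] at hm2
    exact Pocrim.ge_trans _ _ _ hm2 (aux_add_im_ge s a)
  -- step 11 : t ≥ v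
  have h11 : im t v = z := by
    have hpc : im (ad t b) a = z := by rwa [ad_comm t b, ← hp]
    have := (resid t b a).mp hpc
    rwa [← hv] at this
  -- easy direction : v ≥ t
  have h12 : im v t = z := by
    rw [ht]; exact aux_le_im v u
  have heq : t = v := ge_antisymm _ _ h11 h12
  rcases h u v (heq.symm.trans ht) with hz | hz
  · exact Or.inl (show im a b = z from hu ▸ hz)
  · exact Or.inr (show im b a = z from hv ▸ hz)
end
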